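/- arXiv:2604.23752 — 4 statements merged into one kernel-verified Lean document; each statement's English description precedes it below -/
import Mathlib

section
/- Define f_v(E) = f_E(E)/√E for the kappa density. Then the ratio ⟨E^(−1/2)⟩ / f_v(0) equals T₀/κ, and with T₀ = (κ − 3/2) T_eff this ratio equals ((κ − 3/2)/κ) · T_eff = T_core. -/
open MeasureTheory Real

/-- The energy-space kappa distribution density. -/
noncomputable def kappaDensity (κ T₀ E : ℝ) : ℝ :=
  (2 / Real.sqrt π) * (Real.Gamma (κ + 1) / Real.Gamma (κ - 1/2)) *
    T₀ ^ (-(3:ℝ)/2) * Real.sqrt E * (1 + E / T₀) ^ (-(κ + 1))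

/-- The zero-energy value of the velocity-space kappa distribution
`f_v(E) = f_E(E)/√E`. -/
noncomputable def kappaFv0 (κ T₀ : ℝ) : ℝ :=
  (2 / Real.sqrt π) * (Real.Gamma (κ + 1) / Real.Gamma (κ - 1/2)) * T₀ ^ (-(3:ℝ)/2)

lemma kappa_integral_aux (κ T₀ : ℝ) (hκ : κ > 3/2) (hT : T₀ > 0) :
    ∫ E in Set.Ioi (0:ℝ), (1 + E / T₀) ^ (-(κ + 1)) = T₀ / κ := by
  have hκ0 : (0:ℝ) < κ := by linarith
  set g : ℝ → ℝ := fun x => -(T₀ / κ) * (1 + x / T₀) ^ (-κ) with hg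
  have hbase : ∀ x : ℝ, x ∈ Set.Ici (0:ℝ) → 0 < 1 + x / T₀ := by
    intro x hx
    have : 0 ≤ x / T₀ := div_nonneg hx hT.le
    linarith
  have hderiv : ∀ x ∈ Set.Ici (0:ℝ),
      HasDerivAt g ((1 + x / T₀) ^ (-(κ + 1))) x := by
    intro x hx
    have h1 : HasDerivAt (fun y : ℝ => 1 + y / T₀) (1 / T₀) x := by
      simpa using ((hasDerivAt_id x).div_const T₀).const_add 1
    have h2 : HasDerivAt (fun y : ℝ => (1 + y / T₀) ^ (-κ))
        (1 / T₀ * (-κ) * (1 + x / T₀) ^ (-κ - 1)) x :=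
      h1.rpow_const (Or.inl (ne_of_gt (hbase x hx)))
    have h3 := h2.const_mul (-(T₀ / κ))
    refine h3.congr_deriv ?_
    have hne : -κ - 1 = -(κ + 1) := by ring
    rw [← hne]
    field_simp
  have hpos : ∀ x ∈ Set.Ioi (0:ℝ), 0 ≤ (1 + x / T₀) ^ (-(κ + 1)) := by
    intro x hx
    exact Real.rpow_nonneg (hbase x (le_of_lt (show (0:ℝ) < x from hx))).le _
  have htend : Filter.Tendsto g Filter.atTop (nhds 0) := by
    have h1 : Filter.Tendsto (fun x : ℝ => 1 + x / T₀) Filter.atTop Filter.atTop :=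
      Filter.tendsto_atTop_add_const_left _ 1 (Filter.tendsto_id.atTop_div_const hT)
    have h2 : Filter.Tendsto (fun x : ℝ => (1 + x / T₀) ^ (-κ)) Filter.atTop (nhds 0) :=
      (tendsto_rpow_neg_atTop hκ0).comp h1
    have := h2.const_mul (-(T₀ / κ))
    simpa [hg, neg_mul] using this
  have := integral_Ioi_of_hasDerivAt_of_nonneg' hderiv hpos htend
  rw [this]
  have h0 : ((1:ℝ) + 0 / T₀) ^ (-κ) = 1 := by
    norm_num
  simp only [hg, h0]
  ring

lemma kappa_ratio (κ T₀ : ℝ) (hκ : κ > 3/2) (hT : T₀ > 0) :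
    (∫ E in Set.Ioi (0:ℝ), E ^ (-(1:ℝ)/2) * kappaDensity κ T₀ E) / kappaFv0 κ T₀
      = T₀ / κ := by
  have hC : kappaFv0 κ T₀ > 0 := by
    unfold kappaFv0
    have h1 : 0 < 2 / Real.sqrt π := by positivity
    have h2 : 0 < Real.Gamma (κ + 1) := Real.Gamma_pos_of_pos (by linarith)
    have h3 : 0 < Real.Gamma (κ - 1/2) := Real.Gamma_pos_of_pos (by linarith)
    have h4 : (0:ℝ) < T₀ ^ (-(3:ℝ)/2) := Real.rpow_pos_of_pos hT _
    positivity
  have heq : ∫ E in Set.Ioi (0:ℝ), E ^ (-(1:ℝ)/2) * kappaDensity κ T₀ E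
      = kappaFv0 κ T₀ * (T₀ / κ) := by
    rw [← kappa_integral_aux κ T₀ hκ hT, ← integral_const_mul]
    apply setIntegral_congr_fun measurableSet_Ioi
    intro E hE
    have hE' : (0:ℝ) < E := hE
    have hs : Real.sqrt E = E ^ ((1:ℝ)/2) := Real.rpow_def_of_pos hE' _ ▸ Real.sqrt_eq_rpow E
    have hone : E ^ (-(1:ℝ)/2) * E ^ ((1:ℝ)/2) = 1 := by
      rw [← Real.rpow_add hE']
      norm_num
    simp only [kappaDensity, kappaFv0]
    rw [hs]
    calc E ^ (-(1:ℝ)/2) * (2 / Real.sqrt π * (Real.Gamma (κ + 1) / Real.Gamma (κ - 1/2)) *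
          T₀ ^ (-(3:ℝ)/2) * E ^ ((1:ℝ)/2) * (1 + E / T₀) ^ (-(κ + 1)))
        = (E ^ (-(1:ℝ)/2) * E ^ ((1:ℝ)/2)) * (2 / Real.sqrt π *
          (Real.Gamma (κ + 1) / Real.Gamma (κ - 1/2)) * T₀ ^ (-(3:ℝ)/2) *
          (1 + E / T₀) ^ (-(κ + 1))) := by ring
      _ = 2 / Real.sqrt π * (Real.Gamma (κ + 1) / Real.Gamma (κ - 1/2)) * T₀ ^ (-(3:ℝ)/2) *
          (1 + E / T₀) ^ (-(κ + 1)) := by rw [hone]; ring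
  rw [heq]
  field_simp

theorem sourceFunction_identity (κ T₀ : ℝ) (hκ : κ > 3/2) (hT : T₀ > 0) :
    (∫ E in Set.Ioi (0:ℝ), E ^ (-(1:ℝ)/2) * kappaDensity κ T₀ E) / kappaFv0 κ T₀
      = T₀ / κ ∧
    ∀ Teff : ℝ, Teff > 0 → T₀ = (κ - 3/2) * Teff →
      (∫ E in Set.Ioi (0:ℝ), E ^ (-(1:ℝ)/2) * kappaDensity κ T₀ E) / kappaFv0 κ T₀
        = ((κ - 3/2) / κ) * Teff := by
  refine ⟨kappa_ratio κ T₀ hκ hT, fun Teff _ hTeq => ?_⟩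
  rw [kappa_ratio κ T₀ hκ hT, hTeq]
  ring
end

section
/- For κ > 3/2, the expectation ⟨ln(1 + E/T₀)⟩ under the energy-space kappa density equals ψ(κ+1) − ψ(κ−1/2), where ψ is the digamma function. -/
open MeasureTheory Real

/-- The digamma function `ψ = (log ∘ Γ)'`. -/
noncomputable def digamma (x : ℝ) : ℝ :=
  deriv (fun t => Real.log (Real.Gamma t)) x


lemma beta_Ioo {a b : ℝ} (ha : 0 < a) (hb : 0 < b) :
    ∫ u in Set.Ioo (0:ℝ) 1, u ^ (a-1) * (1-u) ^ (b-1) =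
      Real.Gamma a * Real.Gamma b / Real.Gamma (a+b) := by
  have hC : Complex.Gamma a * Complex.Gamma b
      = Complex.Gamma (a+b) * Complex.betaIntegral a b := by
    simpa using Complex.Gamma_mul_Gamma_eq_betaIntegral
      (by simpa using ha) (by simpa using hb)
  have hbeta : Complex.betaIntegral a b
      = ((∫ x in (0:ℝ)..1, x ^ (a-1) * (1-x) ^ (b-1) : ℝ) : ℂ) := by
    rw [Complex.betaIntegral, ← intervalIntegral.integral_ofReal]
    refine intervalIntegral.integral_congr fun x hx => ?_
    rw [Set.uIcc_of_le (by norm_num : (0:ℝ) ≤ 1)] at hx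
    obtain ⟨hx0, hx1⟩ := hx
    rw [Complex.ofReal_mul, Complex.ofReal_cpow hx0, Complex.ofReal_cpow (by linarith : (0:ℝ) ≤ 1 - x)]
    push_cast
    ring
  have hint : (∫ x in (0:ℝ)..1, x ^ (a-1) * (1-x) ^ (b-1) : ℝ)
      = ∫ u in Set.Ioo (0:ℝ) 1, u ^ (a-1) * (1-u) ^ (b-1) := by
    rw [intervalIntegral.integral_of_le (by norm_num : (0:ℝ) ≤ 1),
      MeasureTheory.integral_Ioc_eq_integral_Ioo]
  have hGab : Complex.Gamma ((a:ℂ)+b) ≠ 0 := by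
    rw [← Complex.ofReal_add, Complex.Gamma_ofReal]
    exact_mod_cast (Real.Gamma_pos_of_pos (by linarith)).ne'
  rw [hbeta, hint] at hC
  rw [← Complex.ofReal_add, Complex.Gamma_ofReal, Complex.Gamma_ofReal,
    Complex.Gamma_ofReal] at hC
  have := congrArg Complex.re hC
  simp only [← Complex.ofReal_mul, Complex.ofReal_re] at this
  rw [eq_div_iff (Real.Gamma_pos_of_pos (by linarith : 0 < a+b)).ne']
  linarith [this]


lemma Gamma_diff {x : ℝ} (hx : 0 < x) : DifferentiableAt ℝ Real.Gamma x :=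
  Real.differentiableAt_Gamma fun m => by have := Nat.cast_nonneg (α := ℝ) m; intro h; rw [h] at hx; linarith

lemma digamma_eq {x : ℝ} (hx : 0 < x) :
    digamma x = deriv Real.Gamma x / Real.Gamma x := by
  have hΓ : HasDerivAt Real.Gamma (deriv Real.Gamma x) x := (Gamma_diff hx).hasDerivAt
  have hlog := (Real.hasDerivAt_log (Real.Gamma_pos_of_pos hx).ne').comp x hΓ
  rw [digamma]
  rw [div_eq_inv_mul]; exact hlog.deriv

-- derivative of t ↦ Γ(3/2)Γ(t+1)/Γ(t+5/2)
lemma g_hasDeriv {t : ℝ} (ht : 0 < t) :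
    HasDerivAt (fun s => Real.Gamma (3/2) * Real.Gamma (s+1) / Real.Gamma (s+5/2))
      (Real.Gamma (3/2) * Real.Gamma (t+1) / Real.Gamma (t+5/2) *
        (digamma (t+1) - digamma (t+5/2))) t := by
  have h1 : HasDerivAt (fun s : ℝ => Real.Gamma (s+1)) (deriv Real.Gamma (t+1)) t := by
    exact HasDerivAt.comp_add_const t 1 (Gamma_diff (by linarith : (0:ℝ) < t+1)).hasDerivAt
  have h2 : HasDerivAt (fun s : ℝ => Real.Gamma (s+5/2)) (deriv Real.Gamma (t+5/2)) t := by
    exact HasDerivAt.comp_add_const t (5/2) (Gamma_diff (by linarith : (0:ℝ) < t+5/2)).hasDerivAt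
  have hne1 : Real.Gamma (t+1) ≠ 0 := (Real.Gamma_pos_of_pos (by linarith)).ne'
  have hne2 : Real.Gamma (t+5/2) ≠ 0 := (Real.Gamma_pos_of_pos (by linarith)).ne'
  have := ((h1.const_mul (Real.Gamma (3/2))).div h2 hne2)
  refine this.congr_deriv ?_
  rw [digamma_eq (by linarith : (0:ℝ) < t+1), digamma_eq (by linarith : (0:ℝ) < t+5/2)]
  field_simp


lemma J_eq {t₀ : ℝ} (ht : 0 < t₀)
    (hg : HasDerivAt (fun s => Real.Gamma (3/2) * Real.Gamma (s+1) / Real.Gamma (s+5/2))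
      (Real.Gamma (3/2) * Real.Gamma (t₀+1) / Real.Gamma (t₀+5/2) *
        (digamma (t₀+1) - digamma (t₀+5/2))) t₀)
    (hbeta : ∀ t : ℝ, 0 < t →
      ∫ u in Set.Ioo (0:ℝ) 1, u ^ ((1:ℝ)/2) * (1-u) ^ t =
        Real.Gamma (3/2) * Real.Gamma (t+1) / Real.Gamma (t+5/2)) :
    ∫ u in Set.Ioo (0:ℝ) 1, u ^ ((1:ℝ)/2) * ((1-u) ^ t₀ * Real.log (1-u)) =
      Real.Gamma (3/2) * Real.Gamma (t₀+1) / Real.Gamma (t₀+5/2) *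
        (digamma (t₀+1) - digamma (t₀+5/2)) := by
  set μ := volume.restrict (Set.Ioo (0:ℝ) 1) with hμ
  set F : ℝ → ℝ → ℝ := fun t u => u ^ ((1:ℝ)/2) * (1-u) ^ t with hF
  set F' : ℝ → ℝ → ℝ := fun t u => u ^ ((1:ℝ)/2) * ((1-u) ^ t * Real.log (1-u)) with hF'
  have hmeasF : ∀ t : ℝ, AEStronglyMeasurable (F t) μ := by
    intro t
    apply ContinuousOn.aestronglyMeasurable _ measurableSet_Ioo
    apply ContinuousOn.mul
    · exact continuousOn_id.rpow_const fun x hx => Or.inl (ne_of_gt hx.1)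
    · refine (continuousOn_const.sub continuousOn_id).rpow_const fun x hx => Or.inl ?_
      simp only [Set.mem_Ioo] at hx
      simp only [Pi.sub_apply, id_eq]
      intro h; linarith [hx.2]
  have hmeasF' : AEStronglyMeasurable (F' t₀) μ := by
    apply ContinuousOn.aestronglyMeasurable _ measurableSet_Ioo
    apply ContinuousOn.mul
    · exact continuousOn_id.rpow_const fun x hx => Or.inl (ne_of_gt hx.1)
    · apply ContinuousOn.mul
      · refine (continuousOn_const.sub continuousOn_id).rpow_const fun x hx => Or.inl ?_
        simp only [Set.mem_Ioo] at hx
        simp only [Pi.sub_apply, id_eq]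
        intro h; linarith [hx.2]
      · refine Real.continuousOn_log.comp (continuousOn_const.sub continuousOn_id)
          fun x hx => ?_
        simp only [Set.mem_Ioo] at hx
        simp only [Set.mem_compl_iff, Set.mem_singleton_iff, id_eq]
        intro h; linarith [hx.2]
  have hone : Integrable (fun _ : ℝ => (1:ℝ)) μ :=
    (integrableOn_const (C := (1:ℝ)) (s := Set.Ioo (0:ℝ) 1) (μ := volume)
      measure_Ioo_lt_top.ne)
  have hboundmem : ∀ u ∈ Set.Ioo (0:ℝ) 1, ∀ t ∈ Metric.ball t₀ (t₀/2),
      ‖F' t u‖ ≤ 4/t₀ := by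
    intro u hu t htball
    obtain ⟨hu0, hu1⟩ := hu
    have hv0 : (0:ℝ) < 1 - u := by linarith
    have hv1 : 1 - u ≤ 1 := by linarith
    have htt : t₀/2 ≤ t := by
      rw [Metric.mem_ball, Real.dist_eq] at htball
      cases abs_lt.mp htball; linarith
    have hδ : (0:ℝ) < t₀/4 := by linarith
    have hlog : -Real.log (1-u) ≤ (1-u) ^ (-(t₀/4)) / (t₀/4) := by
      rw [← Real.log_inv]
      calc Real.log (1-u)⁻¹ ≤ ((1-u)⁻¹) ^ (t₀/4) / (t₀/4) :=
            Real.log_le_rpow_div (by positivity) hδ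
        _ = (1-u) ^ (-(t₀/4)) / (t₀/4) := by
            rw [Real.inv_rpow hv0.le, ← Real.rpow_neg hv0.le]
    have hlog0 : Real.log (1-u) ≤ 0 := Real.log_nonpos hv0.le hv1
    have h1 : ‖F' t u‖ = u ^ ((1:ℝ)/2) * ((1-u) ^ t * (-Real.log (1-u))) := by
      rw [hF']
      rw [Real.norm_eq_abs, abs_mul, abs_mul, abs_of_nonneg (Real.rpow_nonneg hu0.le _),
        abs_of_nonneg (Real.rpow_nonneg hv0.le _), abs_of_nonpos hlog0]
    rw [h1]
    have h2 : u ^ ((1:ℝ)/2) ≤ 1 := Real.rpow_le_one hu0.le hu1.le (by norm_num)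
    have h3 : (1-u) ^ t ≤ (1-u) ^ (t₀/2) :=
      Real.rpow_le_rpow_of_exponent_ge hv0 hv1 htt
    have h4 : (1-u) ^ (t₀/2) * ((1-u) ^ (-(t₀/4)) / (t₀/4)) = (1-u) ^ (t₀/4) / (t₀/4) := by
      rw [mul_div_assoc', ← Real.rpow_add hv0]
      have : t₀/2 + -(t₀/4) = t₀/4 := by ring
      rw [this]
    calc u ^ ((1:ℝ)/2) * ((1-u) ^ t * (-Real.log (1-u)))
        ≤ 1 * ((1-u) ^ (t₀/2) * ((1-u) ^ (-(t₀/4)) / (t₀/4))) :=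
          mul_le_mul h2
            (mul_le_mul h3 hlog (neg_nonneg.mpr hlog0) (Real.rpow_nonneg hv0.le _))
            (mul_nonneg (Real.rpow_nonneg hv0.le _) (neg_nonneg.mpr hlog0)) zero_le_one
      _ = (1-u) ^ (t₀/4) / (t₀/4) := by rw [one_mul, h4]
      _ ≤ 1 / (t₀/4) := by
          gcongr
          exact Real.rpow_le_one hv0.le hv1 hδ.le
      _ = 4/t₀ := by field_simp
  have hbi : Integrable (fun _ : ℝ => 4/t₀) μ := by
    simpa using hone.const_mul (4/t₀)
  have key := hasDerivAt_integral_of_dominated_loc_of_deriv_le (μ := μ)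
    (F := F) (F' := F') (x₀ := t₀) (bound := fun _ => 4/t₀)
    (Metric.ball_mem_nhds t₀ (by positivity : (0:ℝ) < t₀/2))
    (Filter.Eventually.of_forall hmeasF)
    (by -- Integrable (F t₀) μ
      apply hone.mono' (hmeasF t₀)
      rw [hμ, ae_restrict_iff' measurableSet_Ioo]
      filter_upwards with u hu
      obtain ⟨hu0, hu1⟩ := hu
      have hv0 : (0:ℝ) < 1 - u := by linarith
      rw [Real.norm_eq_abs, abs_mul, abs_of_nonneg (Real.rpow_nonneg hu0.le _),
        abs_of_nonneg (Real.rpow_nonneg hv0.le _)]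
      calc u ^ ((1:ℝ)/2) * (1-u) ^ t₀
          ≤ 1 * 1 := mul_le_mul (Real.rpow_le_one hu0.le hu1.le (by norm_num))
            (Real.rpow_le_one hv0.le (by linarith) ht.le)
            (Real.rpow_nonneg hv0.le _) zero_le_one
        _ = 1 := one_mul 1)
    hmeasF'
    (by rw [hμ, ae_restrict_iff' measurableSet_Ioo]
        filter_upwards with u hu t htb
        exact hboundmem u hu t htb)
    hbi
    (by rw [hμ, ae_restrict_iff' measurableSet_Ioo]
        filter_upwards with u hu t _
        obtain ⟨hu0, hu1⟩ := hu
        have hv0 : (0:ℝ) < 1 - u := by linarith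
        exact ((Real.hasStrictDerivAt_const_rpow hv0 t).hasDerivAt).const_mul _)
  obtain ⟨-, hderiv⟩ := key
  have heq : (fun t => ∫ u, F t u ∂μ)
      =ᶠ[nhds t₀] (fun s => Real.Gamma (3/2) * Real.Gamma (s+1) / Real.Gamma (s+5/2)) := by
    filter_upwards [Metric.ball_mem_nhds t₀ (by positivity : (0:ℝ) < t₀/2)] with t htb
    have h0t : 0 < t := by
      rw [Metric.mem_ball, Real.dist_eq] at htb
      cases abs_lt.mp htb; linarith
    exact hbeta t h0t
  have hg' : HasDerivAt (fun s => Real.Gamma (3/2) * Real.Gamma (s+1) / Real.Gamma (s+5/2))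
      (∫ u, F' t₀ u ∂μ) t₀ := hderiv.congr_of_eventuallyEq heq.symm
  have hfin := hg'.unique hg
  rw [hF'] at hfin
  beta_reduce at hfin
  exact hfin

lemma cv_lemma {T₀ : ℝ} (hT : 0 < T₀) (g : ℝ → ℝ) :
    ∫ E in Set.Ioi (0:ℝ), g E =
      ∫ u in Set.Ioo (0:ℝ) 1, |T₀ / (1-u)^2| * g (T₀ * u / (1-u)) := by
  have himg : (fun u => T₀ * u / (1-u)) '' Set.Ioo (0:ℝ) 1 = Set.Ioi (0:ℝ) := by
    ext x
    constructor
    · rintro ⟨u, ⟨hu0, hu1⟩, rfl⟩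
      have : (0:ℝ) < 1 - u := by linarith
      exact Set.mem_Ioi.mpr (by positivity)
    · intro hx
      rw [Set.mem_Ioi] at hx
      refine ⟨x / (x + T₀), ⟨by positivity, ?_⟩, ?_⟩
      · rw [div_lt_one (by positivity)]; linarith
      · have hxT : x + T₀ ≠ 0 := by positivity
        field_simp
        rw [add_sub_cancel_left, div_self hT.ne']
  have hderiv : ∀ x ∈ Set.Ioo (0:ℝ) 1,
      HasDerivWithinAt (fun u => T₀ * u / (1-u)) (T₀ / (1-x)^2) (Set.Ioo (0:ℝ) 1) x := by
    intro x hx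
    obtain ⟨hx0, hx1⟩ := hx
    have hv : (1:ℝ) - x ≠ 0 := by intro h; linarith
    have h1 : HasDerivAt (fun u : ℝ => T₀ * u) T₀ x := by
      simpa using (hasDerivAt_id x).const_mul T₀
    have h2 : HasDerivAt (fun u : ℝ => 1 - u) (-1) x := by
      simpa using (hasDerivAt_id x).const_sub 1
    have := h1.div h2 hv
    refine (this.congr_deriv ?_).hasDerivWithinAt
    ring
  have hinj : Set.InjOn (fun u => T₀ * u / (1-u)) (Set.Ioo (0:ℝ) 1) := by
    intro a ha b hb hab
    obtain ⟨ha0, ha1⟩ := ha; obtain ⟨hb0, hb1⟩ := hb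
    have hva : (1:ℝ) - a ≠ 0 := by intro h; linarith
    have hvb : (1:ℝ) - b ≠ 0 := by intro h; linarith
    simp only [div_eq_div_iff hva hvb] at hab
    have : T₀ * a - T₀ * b = 0 := by nlinarith [hab]
    have := mul_left_cancel₀ hT.ne' (by linarith : T₀ * a = T₀ * b)
    exact this
  have := integral_image_eq_integral_abs_deriv_smul measurableSet_Ioo hderiv hinj g
  rw [himg] at this
  simpa using this

lemma hbeta_aux {t : ℝ} (ht : 0 < t) :
    ∫ u in Set.Ioo (0:ℝ) 1, u ^ ((1:ℝ)/2) * (1-u) ^ t =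
      Real.Gamma (3/2) * Real.Gamma (t+1) / Real.Gamma (t+5/2) := by
  have h := beta_Ioo (by norm_num : (0:ℝ) < 3/2) (by linarith : (0:ℝ) < t+1)
  have h1 : ∫ u in Set.Ioo (0:ℝ) 1, u ^ ((1:ℝ)/2) * (1-u) ^ t
      = ∫ u in Set.Ioo (0:ℝ) 1, u ^ ((3:ℝ)/2-1) * (1-u) ^ ((t+1)-1) := by
    norm_num
  have h2 : (3:ℝ)/2 + (t+1) = t + 5/2 := by ring
  rw [h1, h, h2]

lemma J_final {t₀ : ℝ} (ht : 0 < t₀) :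
    ∫ u in Set.Ioo (0:ℝ) 1, u ^ ((1:ℝ)/2) * ((1-u) ^ t₀ * Real.log (1-u)) =
      Real.Gamma (3/2) * Real.Gamma (t₀+1) / Real.Gamma (t₀+5/2) *
        (digamma (t₀+1) - digamma (t₀+5/2)) :=
  J_eq ht (g_hasDeriv ht) (fun t htp => hbeta_aux htp)

theorem kappa_log_moment (κ T₀ : ℝ) (hκ : κ > 3/2) (hT : T₀ > 0) :
    ∫ E in Set.Ioi (0:ℝ), Real.log (1 + E / T₀) * kappaDensity κ T₀ E =
      digamma (κ + 1) - digamma (κ - 1/2) := by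
  have hπ : (0:ℝ) < Real.sqrt π := Real.sqrt_pos.mpr pi_pos
  set C : ℝ := (2 / Real.sqrt π) * (Real.Gamma (κ + 1) / Real.Gamma (κ - 1/2)) with hC
  rw [cv_lemma hT]
  have hpt : ∀ u ∈ Set.Ioo (0:ℝ) 1,
      |T₀ / (1-u)^2| * (Real.log (1 + (T₀ * u / (1-u)) / T₀) *
        kappaDensity κ T₀ (T₀ * u / (1-u)))
      = (-C) * (u ^ ((1:ℝ)/2) * ((1-u) ^ (κ - 3/2) * Real.log (1-u))) := by
    intro u hu
    obtain ⟨hu0, hu1⟩ := hu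
    have hv : (0:ℝ) < 1 - u := by linarith
    have habs : |T₀ / (1-u)^2| = T₀ / (1-u)^2 := abs_of_pos (by positivity)
    have hEdiv : (T₀ * u / (1-u)) / T₀ = u / (1-u) := by
      field_simp
    have hone : 1 + u / (1-u) = (1-u)⁻¹ := by
      field_simp
      ring
    have hlog : Real.log (1 + (T₀ * u / (1-u)) / T₀) = - Real.log (1-u) := by
      rw [hEdiv, hone, Real.log_inv]
    have hpow : (1 + (T₀ * u / (1-u)) / T₀) ^ (-(κ+1)) = (1-u) ^ (κ+1) := by
      rw [hEdiv, hone, Real.inv_rpow hv.le, ← Real.rpow_neg hv.le, neg_neg]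
    have hsqrt : Real.sqrt (T₀ * u / (1-u)) =
        T₀ ^ ((1:ℝ)/2) * u ^ ((1:ℝ)/2) * ((1-u) ^ ((1:ℝ)/2))⁻¹ := by
      rw [Real.sqrt_eq_rpow, Real.div_rpow (by positivity) hv.le,
        Real.mul_rpow hT.le hu0.le, div_eq_mul_inv]
    have e1c : T₀ ^ (-(3:ℝ)/2) * (T₀ ^ ((1:ℝ)/2) * T₀) = 1 := by
      nth_rewrite 3 [← Real.rpow_one T₀]
      rw [← Real.rpow_add hT, ← Real.rpow_add hT]
      norm_num
    have e2 : (1-u) ^ (κ+1) = (1-u) ^ (κ - 3/2) * ((1-u) ^ ((1:ℝ)/2) * (1-u)^2) := by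
      rw [← Real.rpow_natCast (1-u) 2, ← Real.rpow_add hv, ← Real.rpow_add hv]
      push_cast
      congr 1
      ring
    rw [kappaDensity, hlog, hpow, hsqrt, habs, e2]
    have h12 : (1-u) ^ ((1:ℝ)/2) ≠ 0 := by positivity
    have h2 : ((1-u):ℝ)^2 ≠ 0 := by positivity
    have hx : ((1-u) ^ ((1:ℝ)/2))⁻¹ * (1-u) ^ ((1:ℝ)/2) = 1 := inv_mul_cancel₀ h12
    have hy : (((1-u):ℝ)^2)⁻¹ * (1-u)^2 = 1 := inv_mul_cancel₀ h2
    linear_combination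
      (-(C * Real.log (1-u) * u ^ ((1:ℝ)/2) * (1-u) ^ (κ - 3/2)) *
        (((1-u) ^ ((1:ℝ)/2))⁻¹ * (1-u) ^ ((1:ℝ)/2)) *
        ((((1-u):ℝ)^2)⁻¹ * (1-u)^2)) * e1c +
      (-(C * Real.log (1-u) * u ^ ((1:ℝ)/2) * (1-u) ^ (κ - 3/2)) *
        ((((1-u):ℝ)^2)⁻¹ * (1-u)^2)) * hx +
      (-(C * Real.log (1-u) * u ^ ((1:ℝ)/2) * (1-u) ^ (κ - 3/2))) * hy
  rw [setIntegral_congr_fun measurableSet_Ioo hpt, integral_const_mul]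
  have hJ := J_final (show (0:ℝ) < κ - 3/2 by linarith)
  rw [show κ - 3/2 + 1 = κ - 1/2 by ring, show κ - 3/2 + 5/2 = κ + 1 by ring] at hJ
  rw [hJ]
  have hG32 : Real.Gamma (3/2) = Real.sqrt π / 2 := by
    rw [show (3/2:ℝ) = 1/2 + 1 by norm_num, Real.Gamma_add_one (by norm_num),
      Real.Gamma_one_half_eq]
    ring
  have hG1 : Real.Gamma (κ + 1) ≠ 0 := (Real.Gamma_pos_of_pos (by linarith)).ne'
  have hG2 : Real.Gamma (κ - 1/2) ≠ 0 := (Real.Gamma_pos_of_pos (by linarith)).ne'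
  rw [hC, hG32]
  have hone : 2 / Real.sqrt π * (Real.Gamma (κ + 1) / Real.Gamma (κ - 1/2)) *
      (Real.sqrt π / 2 * Real.Gamma (κ - 1/2) / Real.Gamma (κ + 1)) = 1 := by
    have hG2' : Real.Gamma ((κ * 2 - 1) / 2) ≠ 0 :=
      (Real.Gamma_pos_of_pos (by linarith)).ne'
    field_simp
    exact div_self (Real.Gamma_pos_of_pos (by linarith)).ne'
  linear_combination (digamma (κ + 1) - digamma (κ - 1/2)) * hone
end

section
/- The Kullback–Leibler divergence of the energy-space kappa density f_κ (with κ > 3/2, scale T₀ = (κ−3/2)T_eff) from the Maxwellian f_Mxw(·;T) equals ln(Γ(κ+1)/Γ(κ−1/2)) + (3/2) ln(T/T₀) − (κ+1)[ψ(κ+1) − ψ(κ−1/2)] + (3/2)(T_eff/T). -/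
open MeasureTheory Real

/-- The Maxwellian energy density at temperature `T`. -/
noncomputable def maxwellDensity (T E : ℝ) : ℝ :=
  (2 / Real.sqrt π) * T ^ (-(3:ℝ)/2) * Real.sqrt E * Real.exp (-E / T)

/-- Kullback–Leibler divergence between densities on `(0,∞)`. -/
noncomputable def klDiv (f g : ℝ → ℝ) : ℝ :=
  ∫ E in Set.Ioi (0:ℝ), f E * Real.log (f E / g E)

namespace KMaux

open Set

lemma gamma32 : Real.Gamma (3/2) = Real.sqrt π / 2 := by
  have h := Real.Gamma_add_one (s := 1/2) (by norm_num)
  rw [show (1:ℝ)/2 + 1 = 3/2 by norm_num] at h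
  rw [h, Real.Gamma_one_half_eq]; ring

/-- The real Beta integral on `Ioo 0 1`. -/
lemma betaIoo {a b : ℝ} (ha : 0 < a) (hb : 0 < b) :
    ∫ x in Ioo (0:ℝ) 1, x ^ (a-1) * (1-x) ^ (b-1) =
      Real.Gamma a * Real.Gamma b / Real.Gamma (a+b) := by
  have key := Complex.Gamma_mul_Gamma_eq_betaIntegral (s := (a:ℂ)) (t := (b:ℂ))
    (by simpa using ha) (by simpa using hb)
  have hcongr : Complex.betaIntegral (a:ℂ) (b:ℂ)
      = ((∫ x in (0:ℝ)..1, x ^ (a-1) * (1-x) ^ (b-1) : ℝ) : ℂ) := by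
    rw [← intervalIntegral.integral_ofReal]
    unfold Complex.betaIntegral
    apply intervalIntegral.integral_congr
    intro x hx
    rw [Set.uIcc_of_le (by norm_num : (0:ℝ) ≤ 1)] at hx
    show (x:ℂ) ^ ((a:ℂ) - 1) * (1 - (x:ℂ)) ^ ((b:ℂ) - 1)
        = ((x ^ (a-1) * (1-x) ^ (b-1) : ℝ) : ℂ)
    rw [Complex.ofReal_mul, Complex.ofReal_cpow hx.1,
      Complex.ofReal_cpow (by linarith [hx.2] : (0:ℝ) ≤ 1 - x)]
    push_cast
    ring
  rw [hcongr, ← Complex.ofReal_add, Complex.Gamma_ofReal, Complex.Gamma_ofReal,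
    Complex.Gamma_ofReal] at key
  have keyR : Real.Gamma a * Real.Gamma b
      = Real.Gamma (a+b) * ∫ x in (0:ℝ)..1, x ^ (a-1) * (1-x) ^ (b-1) := by
    exact_mod_cast key
  rw [intervalIntegral.integral_of_le (by norm_num : (0:ℝ) ≤ 1),
    integral_Ioc_eq_integral_Ioo] at keyR
  have hne := (Real.Gamma_pos_of_pos (by linarith : 0 < a + b)).ne'
  rw [keyR, mul_comm, mul_div_assoc, div_self hne, mul_one]

lemma contOn (p r : ℝ) :
    ContinuousOn (fun x : ℝ => x ^ p * (1+x) ^ (-r)) (Ioi 0) := by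
  intro x hx
  have hx0 : (0:ℝ) < x := hx
  apply ContinuousAt.continuousWithinAt
  exact ((Real.continuousAt_rpow_const x p (Or.inl hx0.ne')).mul
    ((continuous_const.add continuous_id).continuousAt.rpow_const
      (Or.inl (by positivity : (0:ℝ) < 1 + x).ne')))

lemma betaIntOn {c : ℝ} (hc : -1 < c) :
    IntegrableOn (fun u : ℝ => u ^ c * (1-u) ^ ((1:ℝ)/2)) (Ioo (0:ℝ) 1) := by
  have h1 : IntegrableOn (fun u : ℝ => u ^ c) (Ioo (0:ℝ) 1) :=
    ((intervalIntegral.intervalIntegrable_rpow' hc (a := 0) (b := 1)).1).mono_set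
      Ioo_subset_Ioc_self
  apply h1.mono'
  · apply ContinuousOn.aestronglyMeasurable _ measurableSet_Ioo
    intro u hu
    apply ContinuousAt.continuousWithinAt
    exact (Real.continuousAt_rpow_const u c (Or.inl hu.1.ne')).mul
      ((continuous_const.sub continuous_id).continuousAt.rpow_const (Or.inr (by norm_num)))
  · filter_upwards [ae_restrict_mem measurableSet_Ioo] with u hu
    have h2 : (0:ℝ) ≤ 1 - u := by linarith [hu.2]
    have h3 : (1-u) ^ ((1:ℝ)/2) ≤ 1 :=
      Real.rpow_le_one h2 (by linarith [hu.1]) (by norm_num)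
    have h4 : (0:ℝ) ≤ u ^ c := Real.rpow_nonneg hu.1.le c
    rw [Real.norm_of_nonneg (mul_nonneg h4 (Real.rpow_nonneg h2 _))]
    nlinarith [Real.rpow_nonneg h2 ((1:ℝ)/2)]

lemma imageEq : (fun u : ℝ => u⁻¹ - 1) '' Ioo 0 1 = Ioi (0:ℝ) := by
  ext y
  simp only [Set.mem_image, Set.mem_Ioo, Set.mem_Ioi]
  constructor
  · rintro ⟨u, ⟨h0, h1⟩, rfl⟩
    have hu : u * u⁻¹ = 1 := mul_inv_cancel₀ h0.ne'
    have : (1:ℝ) < u⁻¹ := by nlinarith [inv_pos.2 h0]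
    linarith
  · intro hy
    refine ⟨(1+y)⁻¹, ⟨inv_pos.2 (by linarith), ?_⟩, by rw [inv_inv]; ring⟩
    have h1 : (1:ℝ) < 1 + y := by linarith
    have h2 : (0:ℝ) < (1+y)⁻¹ := inv_pos.2 (by linarith)
    nlinarith [mul_inv_cancel₀ (by linarith : (1+y) ≠ 0)]

lemma hderivIoo : ∀ u ∈ Ioo (0:ℝ) 1,
    HasDerivWithinAt (fun u : ℝ => u⁻¹ - 1) (-(u^2)⁻¹) (Ioo 0 1) u :=
  fun u hu => ((hasDerivAt_inv hu.1.ne').sub_const 1).hasDerivWithinAt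

lemma injOnIoo : Set.InjOn (fun u : ℝ => u⁻¹ - 1) (Ioo 0 1) :=
  fun u _ v _ h => inv_injective (by linarith [h] : u⁻¹ = v⁻¹)

lemma transfer {r : ℝ} {u : ℝ} (hu : u ∈ Ioo (0:ℝ) 1) :
    |(-(u^2)⁻¹)| • ((fun x : ℝ => x ^ ((1:ℝ)/2) * (1+x) ^ (-r)) (u⁻¹ - 1))
      = u ^ (r - 5/2) * (1-u) ^ ((1:ℝ)/2) := by
  obtain ⟨h0, h1⟩ := hu
  have hinv : u⁻¹ - 1 = (1-u)/u := by field_simp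
  have h1u : (0:ℝ) ≤ 1 - u := by linarith
  have habs : |(-(u^2)⁻¹)| = (u^2)⁻¹ := by
    rw [abs_neg, abs_of_pos (by positivity)]
  have h2 : (1 + (u⁻¹ - 1)) = u⁻¹ := by ring
  have h3 : (u⁻¹ : ℝ) ^ (-r) = u ^ r := by
    rw [Real.inv_rpow h0.le, Real.rpow_neg h0.le, inv_inv]
  rw [habs, smul_eq_mul]
  show (u^2)⁻¹ * ((u⁻¹ - 1) ^ ((1:ℝ)/2) * (1 + (u⁻¹ - 1)) ^ (-r)) = _
  rw [h2, h3, hinv, Real.div_rpow h1u h0.le]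
  have hu5 : u ^ (r - 5/2) = (u^2)⁻¹ * ((u ^ ((1:ℝ)/2))⁻¹ * u ^ r) := by
    rw [← Real.rpow_natCast u 2, ← Real.rpow_neg h0.le, ← Real.rpow_neg h0.le,
      ← Real.rpow_add h0, ← Real.rpow_add h0]
    congr 1
    push_cast
    ring
  rw [hu5, div_eq_mul_inv]
  ring

lemma I_int {r : ℝ} (hr : 3/2 < r) :
    IntegrableOn (fun x : ℝ => x ^ ((1:ℝ)/2) * (1+x) ^ (-r)) (Ioi 0) := by
  rw [← imageEq,
    integrableOn_image_iff_integrableOn_abs_deriv_smul measurableSet_Ioo hderivIoo injOnIoo]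
  exact (betaIntOn (by linarith : (-1:ℝ) < r - 5/2)).congr_fun
    (fun u hu => (transfer hu).symm) measurableSet_Ioo

lemma I_val {r : ℝ} (hr : 3/2 < r) :
    ∫ x in Ioi (0:ℝ), x ^ ((1:ℝ)/2) * (1+x) ^ (-r)
      = Real.Gamma (3/2) * Real.Gamma (r - 3/2) / Real.Gamma r := by
  rw [← imageEq,
    integral_image_eq_integral_abs_deriv_smul measurableSet_Ioo hderivIoo injOnIoo,
    setIntegral_congr_fun measurableSet_Ioo (fun u hu => transfer hu)]
  have h := betaIoo (a := r - 3/2) (b := (3:ℝ)/2) (by linarith) (by norm_num)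
  rw [show r - 3/2 - 1 = r - 5/2 by ring, show (3:ℝ)/2 - 1 = 1/2 by norm_num,
    show r - 3/2 + 3/2 = r by ring] at h
  rw [h]
  ring

lemma Gamma_hasDerivAt {x : ℝ} (hx : 0 < x) :
    HasDerivAt Real.Gamma (Real.Gamma x * digamma x) x := by
  have hne : ∀ m : ℕ, x ≠ -(m:ℝ) := fun m =>
    (lt_of_le_of_lt (neg_nonpos.2 (Nat.cast_nonneg m)) hx).ne'
  have hd := (Real.differentiableAt_Gamma hne).hasDerivAt
  have hpos := Real.Gamma_pos_of_pos hx
  have hlog : HasDerivAt (fun t => Real.log (Real.Gamma t))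
      (deriv Real.Gamma x / Real.Gamma x) x := hd.log hpos.ne'
  have hdig : digamma x = deriv Real.Gamma x / Real.Gamma x := by
    unfold digamma
    exact hlog.deriv
  have heq : Real.Gamma x * digamma x = deriv Real.Gamma x := by
    rw [hdig]
    field_simp
  rw [heq]
  exact hd

lemma contOnLog (p r : ℝ) :
    ContinuousOn (fun x : ℝ => x ^ p * (1+x) ^ (-r) * Real.log (1+x)) (Ioi 0) := by
  intro x hx
  have hx0 : (0:ℝ) < x := hx
  have hb0 : (0:ℝ) < 1 + x := by positivity
  apply ContinuousAt.continuousWithinAt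
  have hc1 : ContinuousAt (fun x : ℝ => x ^ p * (1+x) ^ (-r)) x :=
    (Real.continuousAt_rpow_const x p (Or.inl hx0.ne')).mul
      ((continuous_const.add continuous_id).continuousAt.rpow_const (Or.inl hb0.ne'))
  have hc2 : ContinuousAt (fun x : ℝ => Real.log (1+x)) x :=
    (Real.continuousAt_log hb0.ne').comp
      ((continuous_const.add continuous_id).continuousAt)
  exact hc1.mul hc2

lemma K_spec {s : ℝ} (hs : 3/2 < s) :
    IntegrableOn (fun x : ℝ => x ^ ((1:ℝ)/2) * (1+x) ^ (-s) * Real.log (1+x)) (Ioi 0) ∧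
    ∫ x in Ioi (0:ℝ), x ^ ((1:ℝ)/2) * (1+x) ^ (-s) * Real.log (1+x)
      = Real.Gamma (3/2) * Real.Gamma (s - 3/2) / Real.Gamma s
          * (digamma s - digamma (s - 3/2)) := by
  set ε : ℝ := (s - 3/2)/4 with hεdef
  have hε : 0 < ε := by rw [hεdef]; linarith
  have hs2 : 3/2 < s - 2*ε := by rw [hεdef]; linarith
  have key := hasDerivAt_integral_of_dominated_loc_of_deriv_le
    (μ := volume.restrict (Ioi (0:ℝ)))
    (F := fun r x => x ^ ((1:ℝ)/2) * (1+x) ^ (-r))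
    (F' := fun r x => -(x ^ ((1:ℝ)/2) * (1+x) ^ (-r) * Real.log (1+x)))
    (x₀ := s)
    (bound := fun x => ε⁻¹ * (x ^ ((1:ℝ)/2) * (1+x) ^ (-(s - 2*ε))))
    (Metric.ball_mem_nhds s hε)
    (Filter.Eventually.of_forall fun r =>
      (contOn ((1:ℝ)/2) r).aestronglyMeasurable measurableSet_Ioi)
    (I_int hs)
    ((contOnLog ((1:ℝ)/2) s).neg.aestronglyMeasurable measurableSet_Ioi)
    ?_ ?_ ?_
  · obtain ⟨hint, hder⟩ := key
    have hint' : IntegrableOn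
        (fun x : ℝ => x ^ ((1:ℝ)/2) * (1+x) ^ (-s) * Real.log (1+x)) (Ioi 0) := by
      refine hint.neg.congr (Filter.Eventually.of_forall fun x => ?_)
      simp
    refine ⟨hint', ?_⟩
    have hs32 : (0:ℝ) < s - 3/2 := by linarith
    have hs0 : (0:ℝ) < s := by linarith
    have ha : HasDerivAt (fun r : ℝ => Real.Gamma (r - 3/2))
        (Real.Gamma (s-3/2) * digamma (s-3/2)) s := by
      have h := (Gamma_hasDerivAt hs32).comp s ((hasDerivAt_id s).sub_const (3/2))
      exact h.congr_deriv (mul_one _)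
    have hb := Gamma_hasDerivAt hs0
    have hΓs := (Real.Gamma_pos_of_pos hs0).ne'
    have hdiv := ((ha.const_mul (Real.Gamma (3/2))).div hb hΓs)
    have hev : (fun r => ∫ x in Ioi (0:ℝ), x ^ ((1:ℝ)/2) * (1+x) ^ (-r))
        =ᶠ[nhds s] (fun r => Real.Gamma (3/2) * Real.Gamma (r - 3/2) / Real.Gamma r) := by
      filter_upwards [eventually_gt_nhds hs] with r hr using I_val hr
    have hder2 : HasDerivAt
        (fun r => Real.Gamma (3/2) * Real.Gamma (r - 3/2) / Real.Gamma r)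
        (∫ x in Ioi (0:ℝ),
          -(x ^ ((1:ℝ)/2) * (1+x) ^ (-s) * Real.log (1+x))) s :=
      hder.congr_of_eventuallyEq hev.symm
    have huniq := hder2.unique hdiv
    rw [integral_neg] at huniq
    have hval : ∫ x in Ioi (0:ℝ), x ^ ((1:ℝ)/2) * (1+x) ^ (-s) * Real.log (1+x)
        = -((Real.Gamma (3/2) * (Real.Gamma (s-3/2) * digamma (s-3/2)) * Real.Gamma s
            - Real.Gamma (3/2) * Real.Gamma (s - 3/2) * (Real.Gamma s * digamma s))
              / Real.Gamma s ^ 2) := by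
      linarith [huniq]
    rw [hval]
    field_simp
    ring
  · -- bound
    rw [ae_restrict_iff' measurableSet_Ioi]
    refine Filter.Eventually.of_forall fun x hx => fun r hr => ?_
    have hx0 : (0:ℝ) < x := hx
    have hb1 : (1:ℝ) ≤ 1 + x := by linarith
    have hb0 : (0:ℝ) < 1 + x := by linarith
    have hlog0 : 0 ≤ Real.log (1+x) := Real.log_nonneg hb1
    rw [Metric.mem_ball, Real.dist_eq, abs_sub_lt_iff] at hr
    have h1 : (1+x) ^ (-r) ≤ (1+x) ^ (-(s-ε)) :=
      Real.rpow_le_rpow_of_exponent_le hb1 (by linarith [hr.2])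
    have h2 : Real.log (1+x) ≤ ε⁻¹ * (1+x) ^ ε := by
      have h3 : Real.log ((1+x) ^ ε) ≤ (1+x) ^ ε - 1 :=
        Real.log_le_sub_one_of_pos (by positivity)
      rw [Real.log_rpow hb0] at h3
      calc Real.log (1+x) = ε⁻¹ * (ε * Real.log (1+x)) := by field_simp
        _ ≤ ε⁻¹ * ((1+x) ^ ε - 1) :=
            mul_le_mul_of_nonneg_left h3 (by positivity)
        _ ≤ ε⁻¹ * (1+x) ^ ε :=
            mul_le_mul_of_nonneg_left (by linarith) (by positivity)
    have hnn : (0:ℝ) ≤ x ^ ((1:ℝ)/2) * (1+x) ^ (-r) * Real.log (1+x) :=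
      mul_nonneg (mul_nonneg (Real.rpow_nonneg hx0.le _) (Real.rpow_nonneg hb0.le _)) hlog0
    rw [norm_neg, Real.norm_of_nonneg hnn]
    have h5 : x ^ ((1:ℝ)/2) * (1+x) ^ (-r) * Real.log (1+x)
        ≤ x ^ ((1:ℝ)/2) * (1+x) ^ (-(s-ε)) * (ε⁻¹ * (1+x) ^ ε) :=
      mul_le_mul (mul_le_mul_of_nonneg_left h1 (Real.rpow_nonneg hx0.le _)) h2 hlog0
        (mul_nonneg (Real.rpow_nonneg hx0.le _) (Real.rpow_nonneg hb0.le _))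
    refine le_trans h5 (le_of_eq ?_)
    show x ^ ((1:ℝ)/2) * (1+x) ^ (-(s-ε)) * (ε⁻¹ * (1+x) ^ ε)
      = ε⁻¹ * (x ^ ((1:ℝ)/2) * (1+x) ^ (-(s - 2*ε)))
    have h6 : (1+x) ^ (-(s-ε)) * (1+x) ^ ε = (1+x) ^ (-(s-2*ε)) := by
      rw [← Real.rpow_add hb0]
      congr 1
      ring
    rw [← h6]
    ring
  · exact (I_int hs2).const_mul ε⁻¹
  · -- differentiability in the parameter
    rw [ae_restrict_iff' measurableSet_Ioi]
    refine Filter.Eventually.of_forall fun x hx => fun r _ => ?_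
    have hx0 : (0:ℝ) < x := hx
    have hb0 : (0:ℝ) < 1 + x := by linarith
    have h3 : HasDerivAt (fun r : ℝ => Real.log (1+x) * (-r))
        (Real.log (1+x) * (-1)) r := by
      simpa using ((hasDerivAt_id r).neg.const_mul (Real.log (1+x)))
    have h2 := h3.exp
    simp only [← Real.rpow_def_of_pos hb0] at h2
    have h1 := h2.const_mul (x ^ ((1:ℝ)/2))
    exact h1.congr_deriv (by ring)

lemma M_spec {s : ℝ} (hs : 5/2 < s) :
    IntegrableOn (fun x : ℝ => x ^ ((3:ℝ)/2) * (1+x) ^ (-s)) (Ioi 0) ∧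
    ∫ x in Ioi (0:ℝ), x ^ ((3:ℝ)/2) * (1+x) ^ (-s)
      = Real.Gamma (3/2) * Real.Gamma (s - 5/2) / Real.Gamma (s-1)
        - Real.Gamma (3/2) * Real.Gamma (s - 3/2) / Real.Gamma s := by
  have heq : Set.EqOn (fun x : ℝ => x ^ ((3:ℝ)/2) * (1+x) ^ (-s))
      (fun x : ℝ => x ^ ((1:ℝ)/2) * (1+x) ^ (-(s-1)) - x ^ ((1:ℝ)/2) * (1+x) ^ (-s))
      (Ioi 0) := by
    intro x hx
    have hx0 : (0:ℝ) < x := hx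
    have hb : (0:ℝ) < 1 + x := by linarith
    have h1 : x ^ ((3:ℝ)/2) = x ^ ((1:ℝ)/2) * x := by
      rw [show (3:ℝ)/2 = 1/2 + 1 by norm_num, Real.rpow_add hx0, Real.rpow_one]
    have h2 : (1+x) ^ (-(s-1)) = (1+x) * (1+x) ^ (-s) := by
      rw [show -(s-1) = 1 + -s by ring, Real.rpow_add hb, Real.rpow_one]
    show x ^ ((3:ℝ)/2) * (1+x) ^ (-s)
      = x ^ ((1:ℝ)/2) * (1+x) ^ (-(s-1)) - x ^ ((1:ℝ)/2) * (1+x) ^ (-s)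
    rw [h1, h2]
    ring
  have hi1 := I_int (show 3/2 < s - 1 by linarith)
  have hi2 := I_int (show 3/2 < s by linarith)
  constructor
  · exact IntegrableOn.congr_fun (hi1.sub hi2) (fun x hx => (heq hx).symm) measurableSet_Ioi
  · rw [setIntegral_congr_fun measurableSet_Ioi heq, integral_sub hi1 hi2,
      I_val (show 3/2 < s - 1 by linarith), I_val (show 3/2 < s by linarith),
      show s - 1 - 3/2 = s - 5/2 by ring]

end KMaux

theorem kappa_maxwell_klDiv (κ Teff T : ℝ) (hκ : κ > 3/2) (hTeff : Teff > 0)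
    (hT : T > 0) :
    klDiv (kappaDensity κ ((κ - 3/2) * Teff)) (maxwellDensity T) =
      Real.log (Real.Gamma (κ + 1) / Real.Gamma (κ - 1/2)) +
        (3/2) * Real.log (T / ((κ - 3/2) * Teff)) -
        (κ + 1) * (digamma (κ + 1) - digamma (κ - 1/2)) +
        (3/2) * (Teff / T) := by
  have hκ0 : (0:ℝ) < κ := by linarith
  have hκ1 : (0:ℝ) < κ + 1 := by linarith
  have hκ2 : (0:ℝ) < κ - 1/2 := by linarith
  have hκ3 : (0:ℝ) < κ - 3/2 := by linarith
  obtain ⟨T₀, hT₀def⟩ : ∃ x : ℝ, x = (κ - 3/2) * Teff := ⟨_, rfl⟩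
  rw [← hT₀def]
  have hT₀ : 0 < T₀ := by rw [hT₀def]; exact mul_pos hκ3 hTeff
  have hπ : (0:ℝ) < Real.sqrt π := Real.sqrt_pos.2 Real.pi_pos
  have hΓ1 := Real.Gamma_pos_of_pos hκ1
  have hΓ2 := Real.Gamma_pos_of_pos hκ2
  have hΓκ := Real.Gamma_pos_of_pos hκ0
  have hΓ3 := Real.Gamma_pos_of_pos hκ3
  obtain ⟨a, hadef⟩ : ∃ x : ℝ, x = Real.log (Real.Gamma (κ+1) / Real.Gamma (κ-1/2))
      + (3/2) * Real.log (T/T₀) := ⟨_, rfl⟩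
  rw [← hadef]
  have hpt : ∀ E ∈ Set.Ioi (0:ℝ),
      kappaDensity κ T₀ E * Real.log (kappaDensity κ T₀ E / maxwellDensity T E)
      = (2 / Real.sqrt π * (Real.Gamma (κ+1) / Real.Gamma (κ-1/2)) * T₀ ^ (-(3:ℝ)/2)
          * T₀ ^ ((1:ℝ)/2))
        * ((fun x => x ^ ((1:ℝ)/2) * (1+x) ^ (-(κ+1))
            * (a + (T₀/T)*x - (κ+1)*Real.log (1+x))) (T₀⁻¹ * E)) := by
    intro E hE
    have hE0 : (0:ℝ) < E := hE
    have hEb : (0:ℝ) < 1 + E/T₀ := by positivity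
    have hsE : (0:ℝ) < Real.sqrt E := Real.sqrt_pos.2 hE0
    have e1 : T₀ ^ (-(3:ℝ)/2) = (T₀ ^ ((3:ℝ)/2))⁻¹ := by
      rw [show (-(3:ℝ)/2) = -((3:ℝ)/2) by ring, Real.rpow_neg hT₀.le]
    have e2 : T ^ (-(3:ℝ)/2) = (T ^ ((3:ℝ)/2))⁻¹ := by
      rw [show (-(3:ℝ)/2) = -((3:ℝ)/2) by ring, Real.rpow_neg hT.le]
    have e3 : (T/T₀) ^ ((3:ℝ)/2) = T ^ ((3:ℝ)/2) / T₀ ^ ((3:ℝ)/2) :=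
      Real.div_rpow hT.le hT₀.le _
    have hT32 : (0:ℝ) < T ^ ((3:ℝ)/2) := Real.rpow_pos_of_pos hT _
    have hT032 : (0:ℝ) < T₀ ^ ((3:ℝ)/2) := Real.rpow_pos_of_pos hT₀ _
    have hP : (0:ℝ) < (1+E/T₀) ^ (-(κ+1)) := Real.rpow_pos_of_pos hEb _
    have hex : (0:ℝ) < Real.exp (E/T) := Real.exp_pos _
    have hratio : kappaDensity κ T₀ E / maxwellDensity T E
        = (Real.Gamma (κ+1)/Real.Gamma (κ-1/2)) * (T/T₀) ^ ((3:ℝ)/2)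
          * ((1+E/T₀) ^ (-(κ+1)) * Real.exp (E/T)) := by
      have hg0 : maxwellDensity T E ≠ 0 := by
        unfold maxwellDensity
        exact (mul_pos (mul_pos (mul_pos (div_pos two_pos hπ)
          (Real.rpow_pos_of_pos hT _)) hsE) (Real.exp_pos _)).ne'
      rw [div_eq_iff hg0]
      unfold kappaDensity maxwellDensity
      rw [e1, e2, e3, show -E/T = -(E/T) by ring, Real.exp_neg]
      obtain ⟨P, hPdef⟩ : ∃ p : ℝ, p = (1+E/T₀) ^ (-(κ+1)) := ⟨_, rfl⟩
      rw [← hPdef]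
      have c3 : (T ^ ((3:ℝ)/2) * (T ^ ((3:ℝ)/2))⁻¹) * (Real.exp (E/T) * (Real.exp (E/T))⁻¹) = 1 := by
        rw [mul_inv_cancel₀ hT32.ne', mul_inv_cancel₀ hex.ne', mul_one]
      linear_combination (-(2 / Real.sqrt π * (Real.Gamma (κ+1)/Real.Gamma (κ-1/2))
        * (T₀ ^ ((3:ℝ)/2))⁻¹ * Real.sqrt E * P)) * c3
    have hlogr : Real.log (kappaDensity κ T₀ E / maxwellDensity T E)
        = a + E/T - (κ+1) * Real.log (1+E/T₀) := by
      rw [hratio, Real.log_mul (by positivity) (by positivity),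
        Real.log_mul (by positivity) (by positivity),
        Real.log_mul hP.ne' (Real.exp_pos _).ne',
        Real.log_rpow (div_pos hT hT₀), Real.log_rpow hEb, Real.log_exp, hadef]
      ring
    rw [hlogr]
    show kappaDensity κ T₀ E * (a + E/T - (κ+1) * Real.log (1+E/T₀))
      = (2 / Real.sqrt π * (Real.Gamma (κ+1) / Real.Gamma (κ-1/2)) * T₀ ^ (-(3:ℝ)/2)
          * T₀ ^ ((1:ℝ)/2))
        * ((T₀⁻¹*E) ^ ((1:ℝ)/2) * (1+(T₀⁻¹*E)) ^ (-(κ+1))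
            * (a + (T₀/T)*(T₀⁻¹*E) - (κ+1)*Real.log (1+(T₀⁻¹*E))))
    have h5 : T₀⁻¹ * E = E / T₀ := by rw [inv_mul_eq_div]
    rw [h5]
    have h6 : T₀/T * (E/T₀) = E/T := by field_simp <;> ring
    rw [h6]
    have h7 : (E/T₀) ^ ((1:ℝ)/2) = E ^ ((1:ℝ)/2) / T₀ ^ ((1:ℝ)/2) :=
      Real.div_rpow hE0.le hT₀.le _
    rw [h7]
    unfold kappaDensity
    rw [Real.sqrt_eq_rpow E]
    have hT012 : (0:ℝ) < T₀ ^ ((1:ℝ)/2) := Real.rpow_pos_of_pos hT₀ _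
    obtain ⟨X2, hX2⟩ : ∃ p : ℝ, p = (1+E/T₀) ^ (-(κ+1)) := ⟨_, rfl⟩
    obtain ⟨X3, hX3⟩ : ∃ p : ℝ, p = Real.log (1+E/T₀) := ⟨_, rfl⟩
    obtain ⟨X1, hX1⟩ : ∃ p : ℝ, p = E ^ ((1:ℝ)/2) := ⟨_, rfl⟩
    rw [← hX2, ← hX3, ← hX1]
    have c4 : T₀ ^ ((1:ℝ)/2) * (T₀ ^ ((1:ℝ)/2))⁻¹ = 1 := mul_inv_cancel₀ hT012.ne'
    linear_combination (-(2 / Real.sqrt π * (Real.Gamma (κ+1)/Real.Gamma (κ-1/2))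
      * T₀ ^ (-(3:ℝ)/2) * X1 * X2 * (a + E/T - (κ+1)*X3))) * c4
  unfold klDiv
  rw [setIntegral_congr_fun measurableSet_Ioi hpt, MeasureTheory.integral_const_mul,
    MeasureTheory.integral_comp_mul_left_Ioi
      (fun x => x ^ ((1:ℝ)/2) * (1+x) ^ (-(κ+1))
        * (a + (T₀/T)*x - (κ+1)*Real.log (1+x))) 0 (inv_pos.2 hT₀),
    inv_inv, mul_zero, smul_eq_mul]
  have hs1 : (3:ℝ)/2 < κ + 1 := by linarith
  have hs2 : (5:ℝ)/2 < κ + 1 := by linarith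
  have hI := KMaux.I_int hs1
  have hIv := KMaux.I_val hs1
  have hM := KMaux.M_spec hs2
  have hK := KMaux.K_spec hs1
  have hWeq : Set.EqOn (fun x : ℝ => x ^ ((1:ℝ)/2) * (1+x) ^ (-(κ+1))
        * (a + (T₀/T)*x - (κ+1)*Real.log (1+x)))
      (fun x : ℝ => a * (x ^ ((1:ℝ)/2) * (1+x) ^ (-(κ+1)))
        + (T₀/T) * (x ^ ((3:ℝ)/2) * (1+x) ^ (-(κ+1)))
        - (κ+1) * (x ^ ((1:ℝ)/2) * (1+x) ^ (-(κ+1)) * Real.log (1+x)))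
      (Set.Ioi 0) := by
    intro x hx
    have hx0 : (0:ℝ) < x := hx
    have h1 : x ^ ((3:ℝ)/2) = x ^ ((1:ℝ)/2) * x := by
      rw [show (3:ℝ)/2 = 1/2 + 1 by norm_num, Real.rpow_add hx0, Real.rpow_one]
    show x ^ ((1:ℝ)/2) * (1+x) ^ (-(κ+1)) * (a + (T₀/T)*x - (κ+1)*Real.log (1+x))
      = a * (x ^ ((1:ℝ)/2) * (1+x) ^ (-(κ+1)))
        + (T₀/T) * (x ^ ((3:ℝ)/2) * (1+x) ^ (-(κ+1)))
        - (κ+1) * (x ^ ((1:ℝ)/2) * (1+x) ^ (-(κ+1)) * Real.log (1+x))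
    rw [h1]
    ring
  rw [setIntegral_congr_fun measurableSet_Ioi hWeq]
  have hInt1 := hI.const_mul a
  have hInt2 := hM.1.const_mul (T₀/T)
  have hInt3 := hK.1.const_mul (κ+1)
  have hInt12 : Integrable (fun x : ℝ => a * (x ^ ((1:ℝ)/2) * (1+x) ^ (-(κ+1)))
      + (T₀/T) * (x ^ ((3:ℝ)/2) * (1+x) ^ (-(κ+1)))) (volume.restrict (Set.Ioi 0)) :=
    hInt1.add hInt2
  rw [integral_sub hInt12 hInt3, integral_add hInt1 hInt2,
    MeasureTheory.integral_const_mul, MeasureTheory.integral_const_mul,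
    MeasureTheory.integral_const_mul, hIv, hM.2, hK.2]
  rw [show κ+1-3/2 = κ-1/2 by ring, show κ+1-5/2 = κ-3/2 by ring,
    show κ+1-1 = κ by ring, KMaux.gamma32]
  have hconst : ∀ Z : ℝ,
      (2 / Real.sqrt π * (Real.Gamma (κ+1) / Real.Gamma (κ-1/2)) * T₀ ^ (-(3:ℝ)/2)
        * T₀ ^ ((1:ℝ)/2)) * (T₀ * Z)
      = (2 / Real.sqrt π * (Real.Gamma (κ+1) / Real.Gamma (κ-1/2))) * Z := by
    intro Z
    have e1 : T₀ ^ (-(3:ℝ)/2) * T₀ ^ ((1:ℝ)/2) * T₀ = 1 := by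
      nth_rewrite 3 [← Real.rpow_one T₀]
      rw [← Real.rpow_add hT₀, ← Real.rpow_add hT₀]
      norm_num
    calc (2 / Real.sqrt π * (Real.Gamma (κ+1) / Real.Gamma (κ-1/2)) * T₀ ^ (-(3:ℝ)/2)
        * T₀ ^ ((1:ℝ)/2)) * (T₀ * Z)
        = (2 / Real.sqrt π * (Real.Gamma (κ+1) / Real.Gamma (κ-1/2))) * Z
            * (T₀ ^ (-(3:ℝ)/2) * T₀ ^ ((1:ℝ)/2) * T₀) := by ring
      _ = (2 / Real.sqrt π * (Real.Gamma (κ+1) / Real.Gamma (κ-1/2))) * Z := by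
          rw [e1, mul_one]
  rw [hconst]
  have e2 : Real.Gamma (κ+1) = κ * Real.Gamma κ := by
    rw [Real.Gamma_add_one hκ0.ne']
  have e3 : Real.Gamma (κ-1/2) = (κ-3/2) * Real.Gamma (κ-3/2) := by
    have h := Real.Gamma_add_one (s := κ-3/2) hκ3.ne'
    rw [show κ-3/2+1 = κ-1/2 by ring] at h
    rw [h]
  have u1 : 2 / Real.sqrt π * (Real.sqrt π / 2) = 1 := by
    rw [div_mul_div_comm, mul_comm,
      div_self (by positivity : (Real.sqrt π * 2 : ℝ) ≠ 0)]
  have hA : 2 / Real.sqrt π * (Real.Gamma (κ+1) / Real.Gamma (κ-1/2))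
      * (Real.sqrt π / 2 * Real.Gamma (κ-1/2) / Real.Gamma (κ+1)) = 1 := by
    calc 2 / Real.sqrt π * (Real.Gamma (κ+1) / Real.Gamma (κ-1/2))
        * (Real.sqrt π / 2 * Real.Gamma (κ-1/2) / Real.Gamma (κ+1))
        = (2 / Real.sqrt π * (Real.sqrt π / 2))
          * (Real.Gamma (κ+1) / Real.Gamma (κ+1))
          * (Real.Gamma (κ-1/2) / Real.Gamma (κ-1/2)) := by ring
      _ = 1 := by rw [u1, div_self hΓ1.ne', div_self hΓ2.ne', mul_one, mul_one]
  have hB : 2 / Real.sqrt π * (Real.Gamma (κ+1) / Real.Gamma (κ-1/2))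
      * (Real.sqrt π / 2 * Real.Gamma (κ-3/2) / Real.Gamma κ) = κ / (κ-3/2) := by
    rw [e2, e3]
    have hsplit : κ * Real.Gamma κ / ((κ-3/2) * Real.Gamma (κ-3/2))
        = κ/(κ-3/2) * (Real.Gamma κ / Real.Gamma (κ-3/2)) := (div_mul_div_comm _ _ _ _).symm
    rw [hsplit]
    calc 2 / Real.sqrt π * (κ/(κ-3/2) * (Real.Gamma κ / Real.Gamma (κ-3/2)))
        * (Real.sqrt π / 2 * Real.Gamma (κ-3/2) / Real.Gamma κ)
        = (2 / Real.sqrt π * (Real.sqrt π / 2))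
          * (Real.Gamma κ / Real.Gamma κ) * (Real.Gamma (κ-3/2) / Real.Gamma (κ-3/2))
          * (κ / (κ-3/2)) := by ring
      _ = κ / (κ-3/2) := by
          rw [u1, div_self hΓκ.ne', div_self hΓ3.ne', mul_one, mul_one, one_mul]
  have hC : T₀/T * (κ/(κ-3/2) - 1) = 3/2 * (Teff/T) := by
    rw [hT₀def]
    linear_combination (κ * Teff / T) * (mul_inv_cancel₀ hκ3.ne')
  linear_combination (a - T₀/T - (κ+1)*(digamma (κ+1) - digamma (κ-1/2))) * hA
    + (T₀/T) * hB + hC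
end

section
/- Generalized Pythagorean identity for the kappa/Maxwellian pair: for κ > 3/2 and any T > 0, D_KL(f_κ ‖ f_Mxw(T)) = D_KL(f_κ ‖ f_Mxw(T_eff)) + (3/2)[T_eff/T − ln(T_eff/T) − 1], where T_eff is determined by ⟨E⟩_{f_κ} = (3/2)T_eff. -/
open MeasureTheory Real

lemma realBeta {a b : ℝ} (ha : 0 < a) (hb : 0 < b) :
    ∫ t in Set.Ioo (0:ℝ) 1, t ^ (a-1) * (1-t) ^ (b-1)
      = Real.Gamma a * Real.Gamma b / Real.Gamma (a+b) := by
  have hG : Real.Gamma (a+b) ≠ 0 := (Real.Gamma_pos_of_pos (by linarith)).ne'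
  have key : Complex.Gamma a * Complex.Gamma b
      = Complex.Gamma (a+b) * Complex.betaIntegral a b := by
    simpa using Complex.Gamma_mul_Gamma_eq_betaIntegral
      (by simpa using ha) (by simpa using hb)
  have hbeta : Complex.betaIntegral a b
      = ((∫ t in Set.Ioo (0:ℝ) 1, t ^ (a-1) * (1-t) ^ (b-1) : ℝ) : ℂ) := by
    rw [Complex.betaIntegral, intervalIntegral.integral_of_le zero_le_one,
      MeasureTheory.integral_Ioc_eq_integral_Ioo]
    rw [show ((∫ t in Set.Ioo (0:ℝ) 1, t ^ (a-1) * (1-t) ^ (b-1) : ℝ) : ℂ)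
      = ∫ t in Set.Ioo (0:ℝ) 1, ((t ^ (a-1) * (1-t) ^ (b-1) : ℝ) : ℂ) from (integral_ofReal).symm]
    refine setIntegral_congr_fun measurableSet_Ioo (fun x hx => ?_)
    obtain ⟨hx0, hx1⟩ := hx
    rw [Complex.ofReal_mul, Complex.ofReal_cpow hx0.le, Complex.ofReal_cpow (by linarith)]
    push_cast
    ring_nf
  rw [hbeta] at key
  rw [show ((a:ℂ)+(b:ℂ)) = ((a+b:ℝ):ℂ) by push_cast; ring, Complex.Gamma_ofReal,
    Complex.Gamma_ofReal, Complex.Gamma_ofReal, ← Complex.ofReal_mul, ← Complex.ofReal_mul] at key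
  have h2 : Real.Gamma a * Real.Gamma b
      = Real.Gamma (a+b) * ∫ t in Set.Ioo (0:ℝ) 1, t ^ (a-1) * (1-t) ^ (b-1) :=
    Complex.ofReal_inj.mp key
  field_simp [h2]
  rw [h2]; ring

lemma Jval {κ : ℝ} (hκ : 3/2 < κ) :
    ∫ u in Set.Ioi (0:ℝ), Real.sqrt u * (1+u) ^ (-(κ+1))
      = Real.Gamma (3/2) * Real.Gamma (κ-1/2) / Real.Gamma (κ+1) := by
  set φ : ℝ → ℝ := fun t => t / (1-t) with hφ
  have himg : φ '' Set.Ioo (0:ℝ) 1 = Set.Ioi (0:ℝ) := by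
    ext y
    constructor
    · rintro ⟨t, ⟨ht0, ht1⟩, rfl⟩
      exact div_pos ht0 (by linarith)
    · intro hy
      have hy' : (0:ℝ) < y := hy
      have h1y : (0:ℝ) < 1 + y := by linarith
      have key : 1 - y/(1+y) = 1/(1+y) := by field_simp; ring
      refine ⟨y / (1+y), ⟨div_pos hy' h1y, ?_⟩, ?_⟩
      · rw [div_lt_one h1y]; linarith
      · show (y/(1+y)) / (1 - y/(1+y)) = y
        rw [key]
        field_simp
  have hderiv : ∀ t ∈ Set.Ioo (0:ℝ) 1,
      HasDerivWithinAt φ (((1-t)^2)⁻¹) (Set.Ioo (0:ℝ) 1) t := by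
    intro t ht
    obtain ⟨ht0, ht1⟩ := ht
    have h1 : (1:ℝ) - t ≠ 0 := by linarith
    have h : HasDerivAt φ ((1*(1-t) - t*(-1)) / ((1-t)^2)) t :=
      (hasDerivAt_id t).div ((hasDerivAt_id t).const_sub 1) h1
    rw [show (1:ℝ)*(1-t) - t*(-1) = 1 by ring, one_div] at h
    exact h.hasDerivWithinAt
  have hinj : Set.InjOn φ (Set.Ioo (0:ℝ) 1) := by
    rintro x ⟨hx0, hx1⟩ y ⟨hy0, hy1⟩ h
    simp only [hφ] at h
    rw [div_eq_div_iff (by linarith) (by linarith)] at h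
    nlinarith
  have hsub := integral_image_eq_integral_abs_deriv_smul measurableSet_Ioo hderiv hinj
    (fun u => Real.sqrt u * (1+u) ^ (-(κ+1)))
  rw [himg] at hsub
  rw [hsub]
  have hcong : ∫ t in Set.Ioo (0:ℝ) 1,
      |((1-t)^2)⁻¹| • (Real.sqrt (φ t) * (1 + φ t) ^ (-(κ+1)))
      = ∫ t in Set.Ioo (0:ℝ) 1, t ^ ((3:ℝ)/2-1) * (1-t) ^ (κ-1/2-1) := by
    refine setIntegral_congr_fun measurableSet_Ioo (fun t ht => ?_)
    obtain ⟨ht0, ht1⟩ := ht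
    have h1t : (0:ℝ) < 1 - t := by linarith
    have h1p : 1 + φ t = (1-t)⁻¹ := by
      show 1 + t/(1-t) = (1-t)⁻¹
      field_simp
      ring
    have hφt : φ t = t / (1-t) := rfl
    rw [smul_eq_mul, h1p, hφt, abs_of_pos (by positivity),
      Real.sqrt_eq_rpow, Real.div_rpow ht0.le h1t.le, div_eq_mul_inv,
      Real.inv_rpow h1t.le, ← Real.rpow_natCast ((1:ℝ)-t) 2]
    simp only [← Real.rpow_neg h1t.le]
    rw [show κ-1/2-1 = -((2:ℕ):ℝ) + (-((1:ℝ)/2) + -(-(κ+1))) by push_cast; ring,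
      Real.rpow_add h1t, Real.rpow_add h1t, show (3:ℝ)/2-1 = (1:ℝ)/2 by norm_num]
    ring
  rw [hcong, realBeta (by norm_num) (by linarith : (0:ℝ) < κ - 1/2),
    show (3:ℝ)/2 + (κ-1/2) = κ+1 by ring]

lemma kappa_norm {κ T₀ : ℝ} (hκ : 3/2 < κ) (hT₀ : 0 < T₀) :
    ∫ E in Set.Ioi (0:ℝ), kappaDensity κ T₀ E = 1 := by
  set C : ℝ := (2 / Real.sqrt π) * (Real.Gamma (κ + 1) / Real.Gamma (κ - 1/2)) with hC
  set G : ℝ → ℝ := fun u => Real.sqrt (T₀ * u) * (1+u) ^ (-(κ+1)) with hG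
  have h1 : ∀ E : ℝ, kappaDensity κ T₀ E = (C * T₀ ^ (-(3:ℝ)/2)) * G (T₀⁻¹ * E) := by
    intro E
    have h : T₀ * (T₀⁻¹ * E) = E := by field_simp
    simp only [hG, h, kappaDensity, hC]
    rw [show T₀⁻¹ * E = E / T₀ by ring]
    ring
  simp only [h1]
  rw [integral_const_mul, integral_comp_mul_left_Ioi G 0 (inv_pos.mpr hT₀), mul_zero]
  have h2 : ∫ u in Set.Ioi (0:ℝ), G u
      = Real.sqrt T₀ * ∫ u in Set.Ioi (0:ℝ), Real.sqrt u * (1+u) ^ (-(κ+1)) := by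
    rw [← integral_const_mul]
    refine setIntegral_congr_fun measurableSet_Ioi (fun u hu => ?_)
    simp only [hG]
    rw [Real.sqrt_mul hT₀.le]
    ring
  rw [h2, Jval hκ]
  have hπ : (0:ℝ) < Real.sqrt π := Real.sqrt_pos.mpr Real.pi_pos
  have hGa : (0:ℝ) < Real.Gamma (κ+1) := Real.Gamma_pos_of_pos (by linarith)
  have hGb : (0:ℝ) < Real.Gamma (κ-1/2) := Real.Gamma_pos_of_pos (by linarith)
  have hG32 : Real.Gamma (3/2) = Real.sqrt π / 2 := by
    rw [show (3:ℝ)/2 = 1/2 + 1 by norm_num, Real.Gamma_add_one (by norm_num),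
      Real.Gamma_one_half_eq]
    ring
  rw [hG32, smul_eq_mul, inv_inv]
  have e : T₀ * Real.sqrt T₀ = T₀ ^ ((3:ℝ)/2) := by
    rw [Real.sqrt_eq_rpow]
    nth_rw 1 [← Real.rpow_one T₀]
    rw [← Real.rpow_add hT₀]
    norm_num
  have h3 : T₀ ^ (-(3:ℝ)/2) * (T₀ * Real.sqrt T₀) = 1 := by
    rw [e, ← Real.rpow_add hT₀]; norm_num
  have h4 : C * (Real.sqrt π / 2 * Real.Gamma (κ-1/2) / Real.Gamma (κ+1)) = 1 := by
    rw [hC]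
    field_simp
    exact div_self (by rw [show (2*κ-1)/2 = κ - 1/2 by ring]; exact hGb.ne')
  calc C * T₀ ^ (-(3:ℝ)/2) * (T₀ * (Real.sqrt T₀ * (Real.sqrt π / 2 * Real.Gamma (κ-1/2) / Real.Gamma (κ+1))))
      = (T₀ ^ (-(3:ℝ)/2) * (T₀ * Real.sqrt T₀)) * (C * (Real.sqrt π / 2 * Real.Gamma (κ-1/2) / Real.Gamma (κ+1))) := by ring
    _ = 1 := by rw [h3, h4, one_mul]

lemma maxwell_pos {T E : ℝ} (hT : 0 < T) (hE : 0 < E) : 0 < maxwellDensity T E := by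
  unfold maxwellDensity
  have := Real.sqrt_pos.mpr Real.pi_pos
  positivity

lemma log_maxwell {T E : ℝ} (hT : 0 < T) (hE : 0 < E) :
    Real.log (maxwellDensity T E)
      = Real.log (2 / Real.sqrt π) + (-(3:ℝ)/2) * Real.log T + Real.log (Real.sqrt E) - E / T := by
  have hπ : (0:ℝ) < 2 / Real.sqrt π := by
    have := Real.sqrt_pos.mpr Real.pi_pos; positivity
  have h1 : (0:ℝ) < T ^ (-(3:ℝ)/2) := Real.rpow_pos_of_pos hT _
  have h2 : (0:ℝ) < Real.sqrt E := Real.sqrt_pos.mpr hE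
  unfold maxwellDensity
  rw [Real.log_mul (by positivity) (Real.exp_pos _).ne',
    Real.log_mul (by positivity) h2.ne',
    Real.log_mul hπ.ne' h1.ne', Real.log_rpow hT, Real.log_exp]
  ring

theorem kl_pythagorean (κ Teff T : ℝ) (hκ : κ > 3/2) (hTeff : Teff > 0) (hT : T > 0)
    (hmean : ∫ E in Set.Ioi (0:ℝ), E * kappaDensity κ ((κ - 3/2) * Teff) E
      = (3/2) * Teff) :
    klDiv (kappaDensity κ ((κ - 3/2) * Teff)) (maxwellDensity T) =
      klDiv (kappaDensity κ ((κ - 3/2) * Teff)) (maxwellDensity Teff) +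
        (3/2) * (Teff / T - Real.log (Teff / T) - 1) := by
  set T₀ : ℝ := (κ - 3/2) * Teff with hT₀def
  have hT₀ : 0 < T₀ := mul_pos (by linarith) hTeff
  set f : ℝ → ℝ := kappaDensity κ T₀ with hfdef
  have hnorm : ∫ E in Set.Ioi (0:ℝ), f E = 1 := kappa_norm hκ hT₀
  have hπ : (0:ℝ) < Real.sqrt π := Real.sqrt_pos.mpr Real.pi_pos
  have hGa : (0:ℝ) < Real.Gamma (κ+1) := Real.Gamma_pos_of_pos (by linarith)
  have hGb : (0:ℝ) < Real.Gamma (κ-1/2) := Real.Gamma_pos_of_pos (by linarith)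
  have hfpos : ∀ E ∈ Set.Ioi (0:ℝ), 0 < f E := by
    intro E hE
    have hE' : (0:ℝ) < E := hE
    simp only [hfdef, kappaDensity]
    have h1 : (0:ℝ) < 1 + E / T₀ := by positivity
    have := Real.rpow_pos_of_pos h1 (-(κ+1))
    have := Real.rpow_pos_of_pos hT₀ (-(3:ℝ)/2)
    have := Real.sqrt_pos.mpr hE'
    positivity
  -- measurability
  have hmeasf : Measurable f := by
    rw [hfdef]
    unfold kappaDensity
    fun_prop
  -- integrability of f
  have hint_f : IntegrableOn f (Set.Ioi (0:ℝ)) := by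
    by_contra h
    rw [integral_undef h] at hnorm
    norm_num at hnorm
  -- integrability of E * f E
  have hint_Ef : IntegrableOn (fun E => E * f E) (Set.Ioi (0:ℝ)) := by
    by_contra h
    rw [integral_undef h] at hmean
    have : (0:ℝ) < (3/2) * Teff := by linarith
    linarith [hmean ▸ this]
  -- integrability of f * log(1 + E/T₀)
  have hint_log : IntegrableOn (fun E => f E * Real.log (1 + E / T₀)) (Set.Ioi (0:ℝ)) := by
    refine Integrable.mono (hint_Ef.const_mul T₀⁻¹) ?_ ?_
    · exact ((hmeasf.mul ((measurable_const.add (measurable_id.div_const T₀)).log)).aestronglyMeasurable)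
    · filter_upwards [ae_restrict_mem measurableSet_Ioi] with E hE
      have hE' : (0:ℝ) < E := hE
      have hf := (hfpos E hE).le
      have h1 : (0:ℝ) < 1 + E / T₀ := by positivity
      have hlog0 : 0 ≤ Real.log (1 + E / T₀) := Real.log_nonneg (by nlinarith [div_pos hE' hT₀])
      have hlog1 : Real.log (1 + E / T₀) ≤ E / T₀ := by
        have := Real.log_le_sub_one_of_pos h1
        linarith
      rw [Real.norm_eq_abs, Real.norm_eq_abs, abs_of_nonneg (by positivity),
        abs_of_nonneg (by positivity)]
      calc f E * Real.log (1 + E / T₀) ≤ f E * (E / T₀) := by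
            exact mul_le_mul_of_nonneg_left hlog1 hf
        _ = T₀⁻¹ * (E * f E) := by ring
  -- pointwise identities
  have key2 : ∀ E ∈ Set.Ioi (0:ℝ),
      f E * Real.log (f E / maxwellDensity Teff E)
        = (Real.log ((2 / Real.sqrt π) * (Real.Gamma (κ + 1) / Real.Gamma (κ - 1/2)) *
            T₀ ^ (-(3:ℝ)/2)) - Real.log (2 / Real.sqrt π) + (3/2) * Real.log Teff) * f E
          + (-(κ+1)) * (f E * Real.log (1 + E / T₀)) + Teff⁻¹ * (E * f E) := by
    intro E hE
    have hE' : (0:ℝ) < E := hE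
    have hfp := hfpos E hE
    have hgp := maxwell_pos hTeff hE'
    have h1 : (0:ℝ) < 1 + E / T₀ := by positivity
    have hC : (0:ℝ) < (2 / Real.sqrt π) * (Real.Gamma (κ + 1) / Real.Gamma (κ - 1/2)) *
        T₀ ^ (-(3:ℝ)/2) := by
      have := Real.rpow_pos_of_pos hT₀ (-(3:ℝ)/2); positivity
    have hlogf : Real.log (f E)
        = Real.log ((2 / Real.sqrt π) * (Real.Gamma (κ + 1) / Real.Gamma (κ - 1/2)) *
            T₀ ^ (-(3:ℝ)/2)) + Real.log (Real.sqrt E) + (-(κ+1)) * Real.log (1 + E / T₀) := by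
      simp only [hfdef, kappaDensity]
      rw [Real.log_mul (by positivity) (Real.rpow_pos_of_pos h1 _).ne',
        Real.log_mul hC.ne' (Real.sqrt_pos.mpr hE').ne', Real.log_rpow h1]
    rw [Real.log_div hfp.ne' hgp.ne', hlogf, log_maxwell hTeff hE']
    field_simp
    ring
  have key1 : ∀ E ∈ Set.Ioi (0:ℝ),
      f E * Real.log (f E / maxwellDensity T E)
        = f E * Real.log (f E / maxwellDensity Teff E)
          + (((3/2) * (Real.log T - Real.log Teff)) * f E + (T⁻¹ - Teff⁻¹) * (E * f E)) := by
    intro E hE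
    have hE' : (0:ℝ) < E := hE
    have hfp := hfpos E hE
    have hgT := maxwell_pos hT hE'
    have hgTeff := maxwell_pos hTeff hE'
    rw [Real.log_div hfp.ne' hgT.ne', Real.log_div hfp.ne' hgTeff.ne',
      log_maxwell hT hE', log_maxwell hTeff hE']
    field_simp
    ring
  -- integrability of the KL integrands
  have hint1 : IntegrableOn (fun E => f E * Real.log (f E / maxwellDensity Teff E))
      (Set.Ioi (0:ℝ)) := by
    have h := ((hint_f.const_mul (Real.log ((2 / Real.sqrt π) * (Real.Gamma (κ + 1) /
        Real.Gamma (κ - 1/2)) * T₀ ^ (-(3:ℝ)/2)) - Real.log (2 / Real.sqrt π)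
        + (3/2) * Real.log Teff)).add (hint_log.const_mul (-(κ+1)))).add
      (hint_Ef.const_mul Teff⁻¹)
    refine h.congr ?_
    refine ((ae_restrict_iff' measurableSet_Ioi).mpr (Filter.Eventually.of_forall ?_))
    intro E hE
    exact (key2 E hE).symm
  have hint2 : IntegrableOn (fun E => ((3/2) * (Real.log T - Real.log Teff)) * f E
      + (T⁻¹ - Teff⁻¹) * (E * f E)) (Set.Ioi (0:ℝ)) :=
    (hint_f.const_mul _).add (hint_Ef.const_mul _)
  -- main computation
  have main : klDiv f (maxwellDensity T)
      = klDiv f (maxwellDensity Teff)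
        + (((3/2) * (Real.log T - Real.log Teff)) * (∫ E in Set.Ioi (0:ℝ), f E)
          + (T⁻¹ - Teff⁻¹) * ∫ E in Set.Ioi (0:ℝ), E * f E) := by
    unfold klDiv
    rw [setIntegral_congr_fun measurableSet_Ioi key1, integral_add hint1 hint2,
      integral_add (hint_f.const_mul _) (hint_Ef.const_mul _),
      integral_const_mul, integral_const_mul]
  rw [main, hnorm, hmean, Real.log_div hTeff.ne' hT.ne']
  field_simp
  ring
end
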